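/- Let A = [[0,1],[-1,2]] and B = [[0,-1],[1,2]] in SL_2(ℤ). For any n ≥ 1 and nonzero integers r_1,…,r_n, s_1,…,s_n, the absolute value of the trace of A^{r_1} B^{s_1} ⋯ A^{r_n} B^{s_n} is at least 2|r_1 ⋯ r_n · s_1 ⋯ s_n|. -/

import Mathlib

/-!
Both generators are unipotent, `A ^ r = 1 + r • N` and `B ^ s = 1 + s • N'` with
`N ^ 2 = N' ^ 2 = 0`, so `A ^ r * B ^ s` is explicit and `sgn (r s) • A ^ r * B ^ s` dominates
`|r s| • 1` entrywise. If `c • 1 ≤ M` and `d • 1 ≤ M'` entrywise with `c, d ≥ 0`, then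
`(c d) • 1 ≤ M M'`, since the cross terms are products of nonnegative matrices. Hence
`± A^{r₁} B^{s₁} ⋯ A^{rₙ} B^{sₙ}` dominates `∏ |rᵢ sᵢ| • 1`, and its trace is at least
`2 ∏ |rᵢ sᵢ|`.
-/

open Matrix

/-- `A = [[0,1],[-1,2]]` as an element of `SL₂(ℤ)`. -/
noncomputable def NewmanA : Matrix.SpecialLinearGroup (Fin 2) ℤ :=
  ⟨!![0, 1; -1, 2], by simp [Matrix.det_fin_two_of]⟩

/-- `B = [[0,-1],[1,2]]` as an element of `SL₂(ℤ)`. -/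
noncomputable def NewmanB : Matrix.SpecialLinearGroup (Fin 2) ℤ :=
  ⟨!![0, -1; 1, 2], by simp [Matrix.det_fin_two_of]⟩

namespace Matrix.SpecialLinearGroup

variable {n R : Type*} [Fintype n] [DecidableEq n] [CommRing R]

theorem coe_zpow_of_eq_one_add {g : SpecialLinearGroup n R} {N : Matrix n n R}
    (hg : (g : Matrix n n R) = 1 + N) (hN : N * N = 0) (k : ℤ) :
    ((g ^ k : SpecialLinearGroup n R) : Matrix n n R) = 1 + k • N := by
  have hinv : ((g⁻¹ : SpecialLinearGroup n R) : Matrix n n R) = 1 - N := by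
    refine left_inv_eq_right_inv (a := (g : Matrix n n R)) ?_ ?_
    · rw [← coe_mul, inv_mul_cancel, coe_one]
    · rw [hg, add_mul, one_mul, mul_sub, mul_one, hN, sub_zero, sub_add_cancel]
  induction k with
  | zero => simp
  | succ k ih =>
    rw [_root_.zpow_add_one, coe_mul, ih, hg]
    simp only [mul_add, add_mul, mul_one, one_mul, smul_mul_assoc, hN, smul_zero]
    module
  | pred k ih =>
    rw [_root_.zpow_sub_one, coe_mul, ih, hinv]
    simp only [mul_sub, add_mul, mul_one, one_mul, smul_mul_assoc, hN, smul_zero]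
    module

end Matrix.SpecialLinearGroup

namespace Matrix

def ScalarLE {n R : Type*} [DecidableEq n] [Semiring R] [LE R] (c : R) (M : Matrix n n R) :
    Prop :=
  ∀ i j, (c • (1 : Matrix n n R)) i j ≤ M i j

theorem scalarLE_fin_two_iff {R : Type*} [Semiring R] [LE R] {c a b c' d : R} :
    ScalarLE c !![a, b; c', d] ↔ c ≤ a ∧ 0 ≤ b ∧ 0 ≤ c' ∧ c ≤ d := by
  simp [ScalarLE, Fin.forall_fin_two, and_assoc]

variable {n R : Type*} [Fintype n] [DecidableEq n] [CommRing R] [PartialOrder R] [IsOrderedRing R]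

theorem ScalarLE.mul {c d : R} {M N : Matrix n n R} (hc : 0 ≤ c) (hd : 0 ≤ d)
    (hM : ScalarLE c M) (hN : ScalarLE d N) : ScalarLE (c * d) (M * N) := by
  obtain ⟨M', hM', rfl⟩ : ∃ M', (∀ i j, 0 ≤ M' i j) ∧ M = c • 1 + M' :=
    ⟨M - c • 1, fun i j => sub_nonneg.2 (hM i j), by abel⟩
  obtain ⟨N', hN', rfl⟩ : ∃ N', (∀ i j, 0 ≤ N' i j) ∧ N = d • 1 + N' :=
    ⟨N - d • 1, fun i j => sub_nonneg.2 (hN i j), by abel⟩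
  have hexpand :
      (c • 1 + M') * (d • 1 + N') = (c * d) • 1 + (c • N' + d • M' + M' * N') := by
    simp only [add_mul, mul_add, mul_one, one_mul, smul_mul_assoc, mul_smul_comm]
    module
  intro i j
  rw [hexpand, add_apply]
  refine le_add_of_nonneg_right (add_nonneg (add_nonneg ?_ ?_) ?_)
  · exact mul_nonneg hc (hN' i j)
  · exact mul_nonneg hd (hM' i j)
  · exact Finset.sum_nonneg fun k _ => mul_nonneg (hM' i k) (hN' k j)

theorem ScalarLE.list_prod_ofFn {k : ℕ} {c : Fin k → R} {M : Fin k → Matrix n n R}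
    (hc : ∀ i, 0 ≤ c i) (hM : ∀ i, ScalarLE (c i) (M i)) :
    ScalarLE (∏ i, c i) (List.ofFn M).prod := by
  induction k with
  | zero => simp [ScalarLE]
  | succ k ih =>
    rw [List.ofFn_succ, List.prod_cons, Fin.prod_univ_succ]
    exact (hM 0).mul (hc 0) (Finset.prod_nonneg fun i _ => hc i.succ)
      (ih (fun i => hc i.succ) fun i => hM i.succ)

theorem ScalarLE.card_nsmul_le_trace {c : R} {M : Matrix n n R} (h : ScalarLE c M) :
    Fintype.card n • c ≤ trace M :=
  Finset.card_nsmul_le_sum _ _ _ fun i _ => by simpa using h i i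

end Matrix

theorem List.prod_ofFn_smul {α β : Type*} [CommMonoid α] [Monoid β] [MulAction α β]
    [IsScalarTower α β β] [SMulCommClass α β β] {k : ℕ} (c : Fin k → α) (f : Fin k → β) :
    (List.ofFn fun i => c i • f i).prod = (∏ i, c i) • (List.ofFn f).prod := by
  induction k with
  | zero => simp
  | succ k ih => rw [List.ofFn_succ, List.prod_cons, ih, List.ofFn_succ, List.prod_cons,
      Fin.prod_univ_succ, smul_mul_smul_comm]

theorem coe_newmanA_zpow (r : ℤ) :
    ((NewmanA ^ r : Matrix.SpecialLinearGroup (Fin 2) ℤ) : Matrix (Fin 2) (Fin 2) ℤ) =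
      !![1 - r, r; -r, 1 + r] := by
  rw [Matrix.SpecialLinearGroup.coe_zpow_of_eq_one_add (N := !![-1, 1; -1, 1])
    (by ext i j; fin_cases i <;> fin_cases j <;> rfl) (by decide)]
  ext i j; fin_cases i <;> fin_cases j <;> simp [sub_eq_add_neg, add_comm]

theorem coe_newmanB_zpow (s : ℤ) :
    ((NewmanB ^ s : Matrix.SpecialLinearGroup (Fin 2) ℤ) : Matrix (Fin 2) (Fin 2) ℤ) =
      !![1 - s, -s; s, 1 + s] := by
  rw [Matrix.SpecialLinearGroup.coe_zpow_of_eq_one_add (N := !![-1, -1; 1, 1])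
    (by ext i j; fin_cases i <;> fin_cases j <;> rfl) (by decide)]
  ext i j; fin_cases i <;> fin_cases j <;> simp [sub_eq_add_neg, add_comm]

theorem coe_newmanA_zpow_mul_newmanB_zpow (r s : ℤ) :
    ((NewmanA ^ r * NewmanB ^ s : Matrix.SpecialLinearGroup (Fin 2) ℤ) :
      Matrix (Fin 2) (Fin 2) ℤ) =
      !![(1 - r) * (1 - s) + r * s, r - s + 2 * r * s;
        s - r + 2 * r * s, (1 + r) * (1 + s) + r * s] := by
  rw [Matrix.SpecialLinearGroup.coe_mul, coe_newmanA_zpow, coe_newmanB_zpow]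
  ext i j; fin_cases i <;> fin_cases j <;> simp [mul_apply] <;> ring

theorem scalarLE_sign_smul_newmanA_zpow_mul_newmanB_zpow {r s : ℤ} (hr : r ≠ 0) (hs : s ≠ 0) :
    ScalarLE |r * s| ((r * s).sign • ((NewmanA ^ r * NewmanB ^ s :
      Matrix.SpecialLinearGroup (Fin 2) ℤ) : Matrix (Fin 2) (Fin 2) ℤ)) := by
  -- Up to the sign, the diagonal entries exceed `|r s|` by `sgn (r s) (1 ∓ r) (1 ∓ s) ≥ 0`, and
  -- the off-diagonal ones are `2 |r s| ± sgn (r s) (r - s) ≥ 0` since `|r - s| ≤ 2 |r s|`.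
  rw [coe_newmanA_zpow_mul_newmanB_zpow]
  simp only [smul_of, smul_cons, smul_eq_mul, smul_empty, scalarLE_fin_two_iff, Int.sign_mul,
    abs_mul]
  rcases hr.lt_or_gt with hr | hr <;> rcases hs.lt_or_gt with hs | hs <;>
    simp only [Int.sign_eq_neg_one_of_neg, Int.sign_eq_one_of_pos, abs_of_neg, abs_of_pos, hr,
      hs] <;>
    refine ⟨?_, ?_, ?_, ?_⟩ <;> nlinarith

theorem newman_trace_bound_general (n : ℕ) (r s : Fin n → ℤ)
    (hr : ∀ i, r i ≠ 0) (hs : ∀ i, s i ≠ 0) :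
    2 * |(∏ i, r i) * ∏ i, s i| ≤
      |Matrix.trace (((List.ofFn fun i => NewmanA ^ r i * NewmanB ^ s i).prod :
        Matrix.SpecialLinearGroup (Fin 2) ℤ) : Matrix (Fin 2) (Fin 2) ℤ)| := by
  set P : Matrix (Fin 2) (Fin 2) ℤ :=
    ↑((List.ofFn fun i => NewmanA ^ r i * NewmanB ^ s i).prod :
      Matrix.SpecialLinearGroup (Fin 2) ℤ) with hP_def
  have hP : ScalarLE (∏ i, |r i * s i|) ((∏ i, (r i * s i).sign) • P) := by
    rw [hP_def, ← Matrix.SpecialLinearGroup.coeMonoidHom_apply, map_list_prod, List.map_ofFn,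
      ← List.prod_ofFn_smul]
    exact ScalarLE.list_prod_ofFn (fun i => abs_nonneg _)
      fun i => scalarLE_sign_smul_newmanA_zpow_mul_newmanB_zpow (hr i) (hs i)
  have hsign : |∏ i, (r i * s i).sign| = 1 := by
    rw [Finset.abs_prod]
    exact Finset.prod_eq_one fun i _ => Int.abs_sign_of_ne_zero (mul_ne_zero (hr i) (hs i))
  calc 2 * |(∏ i, r i) * ∏ i, s i| = Fintype.card (Fin 2) • ∏ i, |r i * s i| := by
        simp [abs_mul, Finset.abs_prod, Finset.prod_mul_distrib]
    _ ≤ trace ((∏ i, (r i * s i).sign) • P) := hP.card_nsmul_le_trace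
    _ ≤ |trace ((∏ i, (r i * s i).sign) • P)| := le_abs_self _
    _ = |trace P| := by rw [trace_smul, smul_eq_mul, abs_mul, hsign, one_mul]

/-- For any `n ≥ 1` and nonzero integers `r₁, …, rₙ, s₁, …, sₙ`, the trace of
`A^{r₁} B^{s₁} ⋯ A^{rₙ} B^{sₙ}` has absolute value at least
`2 |r₁ ⋯ rₙ · s₁ ⋯ sₙ|`. -/
theorem newman_trace_bound (n : ℕ) (hn : 1 ≤ n) (r s : Fin n → ℤ)
    (hr : ∀ i, r i ≠ 0) (hs : ∀ i, s i ≠ 0) :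
    2 * |(∏ i, r i) * ∏ i, s i| ≤
      |Matrix.trace (((List.ofFn fun i => NewmanA ^ r i * NewmanB ^ s i).prod :
        Matrix.SpecialLinearGroup (Fin 2) ℤ) : Matrix (Fin 2) (Fin 2) ℤ)| :=
  newman_trace_bound_general n r s hr hs
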